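/- Assume r ≥ 3. For every integer l with 1 ≤ l ≤ r-2, the following identity holds in W: r_{r-1} · (r_0 r_1 ⋯ r_{r-1} r_r)^l = (r_0 r_1 ⋯ r_{r-1} r_r)^l · r_{r-l-1}. -/

import Mathlib

noncomputable section

open CoxeterSystem
open Fin.NatCast

/-- The Coxeter matrix of the affine Weyl group of type `Ã_{2r}`:
vertices `0, …, 2r` arranged in a cycle mod `N = 2r+1`; `m i j = 3` if
`i - j ≡ ±1 (mod N)`, `m i j = 2` for other off-diagonal pairs. -/
def affACoxeterMatrix (r : ℕ) : CoxeterMatrix (Fin (2 * r + 1)) where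
  M i j := if i = j then 1 else if i = j + 1 ∨ j = i + 1 then 3 else 2
  isSymm := by
    apply Matrix.IsSymm.ext
    intro i j
    by_cases h : j = i
    · subst h; rfl
    · rw [if_neg h, if_neg (fun hh : i = j => h hh.symm)]
      exact if_congr or_comm rfl rfl
  diagonal i := if_pos rfl
  off_diagonal i j h := by
    rw [if_neg h]
    split <;> omega

/-- The affine Weyl group `W` of type `Ã_{2r}`, as the Coxeter group of the above matrix. -/
abbrev AffW (r : ℕ) : Type := (affACoxeterMatrix r).Group

/-- The canonical Coxeter system on `AffW r`. -/
def affCS (r : ℕ) : CoxeterSystem (affACoxeterMatrix r) (AffW r) :=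
  (affACoxeterMatrix r).toCoxeterSystem

/-- The simple reflection `s i` (index taken mod `2r+1`). -/
def sgen (r i : ℕ) : AffW r := (affCS r).simple ((i : ℕ) : Fin (2 * r + 1))

/-- The word in the simple reflections representing the generator `r_i` of the
relative Weyl group: `r_0 = s_0`, `r_i = s_i s_{2r+1-i}` for `1 ≤ i ≤ r-1`,
`r_r = s_r s_{r+1} s_r`. -/
def rword (r : ℕ) : ℕ → List (Fin (2 * r + 1)) := fun i =>
  if i = 0 then [(0 : Fin (2 * r + 1))]
  else if i < r then [((i : ℕ) : Fin (2 * r + 1)), ((2 * r + 1 - i : ℕ) : Fin (2 * r + 1))]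
  else [((r : ℕ) : Fin (2 * r + 1)), ((r + 1 : ℕ) : Fin (2 * r + 1)), ((r : ℕ) : Fin (2 * r + 1))]

/-- The element `r_i` of `W`. -/
def rgen (r i : ℕ) : AffW r := (affCS r).wordProd (rword r i)

/-- The list `[a, a+1, …, b]` (empty if `b < a`). -/
def ascSeq (a b : ℕ) : List ℕ := List.range' a (b + 1 - a)

/-- The list `[b, b-1, …, a]` (empty if `b < a`). -/
def descSeq (a b : ℕ) : List ℕ := (List.range' a (b + 1 - a)).reverse

/-- The expansion, as a word in the simple reflections, of the block
`r_0 r_1 ⋯ r_{r-1} r_r r_{r-1} ⋯ r_k`. -/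
def blockWord (r k : ℕ) : List (Fin (2 * r + 1)) :=
  ((ascSeq 0 r ++ descSeq k (r - 1)).map (rword r)).flatten

/-- The element `r_0 r_1 ⋯ r_{r-1} r_r r_{r-1} ⋯ r_k` of `W`. -/
def blockEl (r k : ℕ) : AffW r := (affCS r).wordProd (blockWord r k)

/-- The expansion, as a word in the simple reflections, of
`ϖ_k = (r_0 r_1 ⋯ r_{r-1} r_r r_{r-1} ⋯ r_k)^k`. -/
def piWord (r k : ℕ) : List (Fin (2 * r + 1)) :=
  (List.replicate k (blockWord r k)).flatten

/-- The element `ϖ_k = (r_0 r_1 ⋯ r_{r-1} r_r r_{r-1} ⋯ r_k)^k` of `W`. -/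
def piEl (r k : ℕ) : AffW r := (affCS r).wordProd (piWord r k)

/-- The expansion of the full block `r_0 r_1 ⋯ r_{r-1} r_r` as a word. -/
def fullBlockWord (r : ℕ) : List (Fin (2 * r + 1)) :=
  ((ascSeq 0 r).map (rword r)).flatten

/-- The element `r_0 r_1 ⋯ r_{r-1} r_r` of `W`. -/
def fullBlockEl (r : ℕ) : AffW r := (affCS r).wordProd (fullBlockWord r)

/-!
Commuting distant simple reflections regroups `B = r_0 r_1 ⋯ r_r` as
`(s_0 s_1 ⋯ s_r)(s_{2r} s_{2r-1} ⋯ s_r)`. For `1 ≤ k ≤ r - 2`, the braid relation carries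
`s_{k+1}` through the ascending factor to `s_k` and `s_{2r-k}` through the descending factor to
`s_{2r+1-k}`, while each of them commutes with the other factor; so `r_{k+1} B = B r_k`.
Iterating this `l` times from `k = r - l - 1` gives the identity.
-/

namespace CoxeterSystem

variable {B W : Type*} [Group W] {M : CoxeterMatrix B} (cs : CoxeterSystem M W)

theorem commute_simple_of_M_eq_two {i j : B} (h : M i j = 2) :
    Commute (cs.simple i) (cs.simple j) := by
  have hsq := cs.simple_mul_simple_pow i j
  rw [h, pow_two, mul_eq_one_iff_eq_inv, mul_inv_rev, cs.inv_simple, cs.inv_simple] at hsq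
  exact hsq

theorem simple_braid_of_M_eq_three {i j : B} (h : M i j = 3) :
    cs.simple i * cs.simple j * cs.simple i = cs.simple j * cs.simple i * cs.simple j := by
  have hcube : (cs.simple i * cs.simple j * cs.simple i) * (cs.simple j * cs.simple i * cs.simple j)
      = 1 := by
    rw [← cs.simple_mul_simple_pow i j, h]; simp only [pow_succ, pow_zero, one_mul, mul_assoc]
  rw [eq_inv_of_mul_eq_one_left hcube]
  simp only [mul_inv_rev, inv_simple, mul_assoc]

theorem wordProd_flatten (L : List (List B)) :
    cs.wordProd L.flatten = (L.map cs.wordProd).prod := by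
  induction L with
  | nil => simp
  | cons ω L ih => rw [List.flatten_cons, wordProd_append, ih, List.map_cons, List.prod_cons]

end CoxeterSystem

theorem mul_eq_mul_of_braid {G : Type*} [Monoid G] {x y P Q : G} (hP : Commute y P)
    (hQ : Commute x Q) (h : y * x * y = x * y * x) :
    y * (P * x * y * Q) = P * x * y * Q * x :=
  calc y * (P * x * y * Q) = P * (y * x * y) * Q := by
        rw [← mul_assoc, ← mul_assoc, ← mul_assoc, hP.eq]; simp only [mul_assoc]
    _ = P * x * y * Q * x := by rw [h]; simp only [mul_assoc, hQ.eq]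

theorem Fin.natCast_add_ne_natCast {n : ℕ} [NeZero n] (a : ℕ) {d : ℕ} (hd₀ : 0 < d)
    (hd : d < n) : ((a + d : ℕ) : Fin n) ≠ a := by
  rw [Nat.cast_add, Ne, add_eq_left, Fin.natCast_eq_zero]
  exact Nat.not_dvd_of_pos_of_lt hd₀ hd

section AffineA

variable {r : ℕ}

theorem sgen_commute {a b : ℕ} (h₁ : a + 2 ≤ b) (h₂ : b < a + 2 * r) :
    Commute (sgen r a) (sgen r b) := by
  obtain ⟨d, rfl⟩ := Nat.exists_eq_add_of_le (by omega : a ≤ b)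
  apply (affCS r).commute_simple_of_M_eq_two
  dsimp only [affACoxeterMatrix]
  rw [if_neg (Fin.natCast_add_ne_natCast a (by omega) (by omega)).symm, if_neg]
  rintro (h | h)
  · rw [← Nat.cast_add_one, add_assoc] at h
    exact Fin.natCast_add_ne_natCast a (by omega) (by omega) h.symm
  · rw [← Nat.cast_add_one, show a + d = a + 1 + (d - 1) by omega] at h
    exact Fin.natCast_add_ne_natCast (a + 1) (by omega) (by omega) h

theorem sgen_braid (r a : ℕ) :
    sgen r a * sgen r (a + 1) * sgen r a = sgen r (a + 1) * sgen r a * sgen r (a + 1) := by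
  by_cases h : ((a : ℕ) : Fin (2 * r + 1)) = ((a + 1 : ℕ) : Fin (2 * r + 1))
  · simp only [sgen, h]
  apply (affCS r).simple_braid_of_M_eq_three
  dsimp only [affACoxeterMatrix]
  rw [if_neg h, if_pos (Or.inr (Nat.cast_add_one a))]

theorem sgen_inv (r a : ℕ) : (sgen r a)⁻¹ = sgen r a := inv_simple _ _

def ascProd (r a n : ℕ) : AffW r := ((List.range' a n).map (sgen r)).prod

theorem ascProd_succ (r a n : ℕ) : ascProd r a (n + 1) = sgen r a * ascProd r (a + 1) n := by
  rw [ascProd, List.range'_succ, List.map_cons, List.prod_cons, ascProd]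

theorem ascProd_concat (r a n : ℕ) : ascProd r a (n + 1) = ascProd r a n * sgen r (a + n) := by
  rw [ascProd, List.range'_1_concat, List.map_append, List.prod_append, ascProd]; simp

theorem ascProd_add (r a m n : ℕ) :
    ascProd r a (m + n) = ascProd r a m * ascProd r (a + m) n := by
  rw [ascProd, ← List.range'_append_1, List.map_append, List.prod_append, ascProd, ascProd]

theorem commute_ascProd {g : AffW r} {a n : ℕ}
    (h : ∀ i, a ≤ i → i < a + n → Commute g (sgen r i)) : Commute g (ascProd r a n) := by
  refine Commute.list_prod_right _ _ fun x hx => ?_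
  obtain ⟨i, hi, rfl⟩ := List.mem_map.mp hx
  rw [List.mem_range'_1] at hi
  exact h i hi.1 hi.2

theorem sgen_succ_mul_ascProd {a m n : ℕ} (ham : a ≤ m) (hmn : m + 2 ≤ a + n)
    (hn : n ≤ 2 * r) :
    sgen r (m + 1) * ascProd r a n = ascProd r a n * sgen r m := by
  obtain ⟨p, rfl⟩ : ∃ p, m = a + p := ⟨m - a, by omega⟩
  obtain ⟨q, rfl⟩ : ∃ q, n = p + 2 + q := ⟨n - (p + 2), by omega⟩
  have hsplit : ascProd r a (p + 2 + q)
      = ascProd r a p * sgen r (a + p) * sgen r (a + p + 1) * ascProd r (a + p + 2) q := by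
    rw [ascProd_add, ascProd_concat, ascProd_concat]; rfl
  rw [hsplit]
  refine mul_eq_mul_of_braid (commute_ascProd fun i hi hi' => ?_)
    (commute_ascProd fun i hi hi' => ?_) (sgen_braid r _).symm
  · exact (sgen_commute (by omega) (by omega)).symm
  · exact sgen_commute (by omega) (by omega)

theorem sgen_mul_ascProd_inv {a m n : ℕ} (ham : a ≤ m) (hmn : m + 2 ≤ a + n)
    (hn : n ≤ 2 * r) :
    sgen r m * (ascProd r a n)⁻¹ = (ascProd r a n)⁻¹ * sgen r (m + 1) := by
  have h := congrArg (·⁻¹) (sgen_succ_mul_ascProd ham hmn hn)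
  simp only [mul_inv_rev, sgen_inv] at h
  exact h.symm

theorem rgen_zero (r : ℕ) : rgen r 0 = sgen r 0 := by
  simp [rgen, rword, sgen]

theorem rgen_of_pos_of_lt {i : ℕ} (hi₀ : 0 < i) (hi : i < r) :
    rgen r i = sgen r i * sgen r (2 * r + 1 - i) := by
  simp [rgen, rword, sgen, hi₀.ne', hi, wordProd_cons]

theorem rgen_self (hr : 0 < r) : rgen r r = sgen r r * sgen r (r + 1) * sgen r r := by
  simp [rgen, rword, sgen, hr.ne', wordProd_cons, mul_assoc]

theorem fullBlockEl_eq_prod (r : ℕ) :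
    fullBlockEl r = ((List.range' 0 (r + 1)).map (rgen r)).prod := by
  simp only [fullBlockEl, fullBlockWord, ascSeq, wordProd_flatten, List.map_map]; rfl

theorem prod_rgen_range' {j : ℕ} (hj : j < r) :
    ((List.range' 0 (j + 1)).map (rgen r)).prod
      = ascProd r 0 (j + 1) * (ascProd r (2 * r + 1 - j) j)⁻¹ := by
  induction j with
  | zero => simp [ascProd, rgen_zero]
  | succ j ih =>
    have hx : Commute (sgen r (j + 1)) (ascProd r (2 * r + 1 - j) j)⁻¹ :=
      (commute_ascProd fun i hi hi' => sgen_commute (by omega) (by omega)).inv_right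
    rw [List.range'_1_concat, List.map_append, List.prod_append, ih (by omega), List.map_singleton,
      List.prod_singleton, zero_add, rgen_of_pos_of_lt (by omega) hj, ascProd_concat r 0 (j + 1),
      zero_add, show 2 * r + 1 - (j + 1) = 2 * r - j by omega, ascProd_succ r (2 * r - j) j,
      show 2 * r - j + 1 = 2 * r + 1 - j by omega, mul_inv_rev, sgen_inv]
    simp only [mul_assoc]
    rw [← mul_assoc _ (sgen r (j + 1)), ← hx.eq, mul_assoc]

theorem fullBlockEl_eq (hr : 0 < r) :
    fullBlockEl r = ascProd r 0 (r + 1) * (ascProd r r (r + 1))⁻¹ := by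
  obtain ⟨j, rfl⟩ : ∃ j, r = j + 1 := ⟨r - 1, by omega⟩
  have hx : Commute (sgen (j + 1) (j + 1)) (ascProd (j + 1) (j + 1 + 1 + 1) j)⁻¹ :=
    (commute_ascProd fun i hi hi' => sgen_commute (by omega) (by omega)).inv_right
  rw [fullBlockEl_eq_prod, List.range'_1_concat, List.map_append, List.prod_append,
    prod_rgen_range' (lt_add_one j), List.map_singleton, List.prod_singleton, zero_add,
    rgen_self hr, ascProd_concat _ 0 (j + 1), ascProd_succ _ (j + 1), ascProd_succ _ (j + 1 + 1),
    show 2 * (j + 1) + 1 - j = j + 1 + 1 + 1 by omega]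
  simp only [mul_inv_rev, sgen_inv, mul_assoc, zero_add]
  congr 1
  rw [← mul_assoc, ← hx.eq, mul_assoc]

theorem rgen_succ_mul_fullBlockEl {k : ℕ} (hk : 0 < k) (hkr : k + 2 ≤ r) :
    rgen r (k + 1) * fullBlockEl r = fullBlockEl r * rgen r k := by
  have hA : Commute (sgen r (2 * r - k)) (ascProd r 0 (r + 1)) :=
    commute_ascProd fun i hi hi' => (sgen_commute (by omega) (by omega)).symm
  have hC : Commute (sgen r k) (ascProd r r (r + 1))⁻¹ :=
    (commute_ascProd fun i hi hi' => sgen_commute (by omega) (by omega)).inv_right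
  have hshiftA : sgen r (k + 1) * ascProd r 0 (r + 1) = ascProd r 0 (r + 1) * sgen r k :=
    sgen_succ_mul_ascProd (by omega) (by omega) (by omega)
  have hshiftC : sgen r (2 * r - k) * (ascProd r r (r + 1))⁻¹
      = (ascProd r r (r + 1))⁻¹ * sgen r (2 * r + 1 - k) := by
    rw [sgen_mul_ascProd_inv (by omega) (by omega) (by omega),
      show 2 * r - k + 1 = 2 * r + 1 - k by omega]
  rw [fullBlockEl_eq (by omega), rgen_of_pos_of_lt (by omega) (by omega),
    rgen_of_pos_of_lt hk (by omega), show 2 * r + 1 - (k + 1) = 2 * r - k by omega]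
  exact Eq.symm <| SemiconjBy.mul_left (SemiconjBy.mul_right hshiftA.symm hA.symm)
    (SemiconjBy.mul_right hC.symm hshiftC.symm)

theorem rgen_add_mul_fullBlockEl_pow {k l : ℕ} (hk : 0 < k) (hkl : k + l + 1 ≤ r) :
    rgen r (k + l) * fullBlockEl r ^ l = fullBlockEl r ^ l * rgen r k := by
  induction l with
  | zero => simp
  | succ l ih =>
    rw [pow_succ', ← add_assoc, ← mul_assoc, rgen_succ_mul_fullBlockEl (by omega) (by omega),
      mul_assoc, ih (by omega), mul_assoc]

end AffineA

theorem statement4_general (r l : ℕ) (hl1 : 1 ≤ l) (hl2 : l ≤ r - 2) :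
    rgen r (r - 1) * (fullBlockEl r) ^ l = (fullBlockEl r) ^ l * rgen r (r - l - 1) := by
  have h := rgen_add_mul_fullBlockEl_pow (r := r) (k := r - l - 1) (l := l) (by omega) (by omega)
  rwa [show r - l - 1 + l = r - 1 by omega] at h

/-- For `r ≥ 3` and `1 ≤ l ≤ r-2`, one has
`r_{r-1} · (r_0 r_1 ⋯ r_{r-1} r_r)^l = (r_0 r_1 ⋯ r_{r-1} r_r)^l · r_{r-l-1}` in `W`. -/
theorem statement4 (r l : ℕ) (hr : 3 ≤ r) (hl1 : 1 ≤ l) (hl2 : l ≤ r - 2) :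
    rgen r (r - 1) * (fullBlockEl r) ^ l = (fullBlockEl r) ^ l * rgen r (r - l - 1) :=
  statement4_general r l hl1 hl2
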